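/- Suppose û : ℝ → ℂ is supported in [−ξ₀/2, ξ₀/2] and square-integrable, with Fourier series û(ξ) = ∑_{n∈ℤ} c_n e^{i2πnξ/ξ₀}, where c_{−n} = (1/ξ₀)∫ û(ξ)e^{i2πξn/ξ₀}dξ. If the support of û is contained in a compact interval strictly inside [−0.8·ξ₀/(2π), 0.8·ξ₀/(2π)] and û is not identically zero, then it is impossible that all coefficients satisfy c_n = (1/ξ₀)(m_n·Δ + γ) with m_n ∈ ℤ for fixed Δ > 0, γ ∈ ℝ. -/

import Mathlib

/-!
By Parseval the Fourier coefficients of `u` on the period interval tend to zero; values in a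
coset `γ + Δℤ` that tend to zero are eventually zero, so `u` agrees a.e. on that interval with a
trigonometric polynomial. Since `0.8 < π`, the support of `u` stays away from the end of the
period interval, so the polynomial vanishes on an open interval; being real-analytic, it vanishes
identically, and hence so does `u`.
-/

open Real MeasureTheory Set Filter Topology

theorem Filter.Tendsto.eventually_eq_zero_of_forall_eq_intCast_mul_add
    {ι : Type*} {l : Filter ι} [l.NeBot] {f : ι → ℝ} {Δ γ : ℝ} (hΔ : Δ ≠ 0)
    (hf : ∀ i, ∃ m : ℤ, f i = m * Δ + γ) (hlim : Tendsto f l (𝓝 0)) :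
    ∀ᶠ i in l, f i = 0 := by
  choose m hm using hf
  have hsmall : ∀ᶠ i in l, |f i| < |Δ| / 2 := by
    simpa [Real.dist_eq] using Metric.tendsto_nhds.mp hlim (|Δ| / 2) (by positivity)
  have hconst {i j : ι} (hi : |f i| < |Δ| / 2) (hj : |f j| < |Δ| / 2) : f i = f j := by
    have hlt : |((m i - m j : ℤ) : ℝ)| * |Δ| < 1 * |Δ| := by
      rw [← abs_mul, Int.cast_sub, sub_mul, ← add_sub_add_right_eq_sub _ _ γ, ← hm, ← hm]
      linarith [abs_sub (f i) (f j)]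
    have hm_eq : m i = m j := by
      have := Int.abs_lt_one_iff.mp (by exact_mod_cast lt_of_mul_lt_mul_right hlt (abs_nonneg Δ))
      omega
    rw [hm i, hm j, hm_eq]
  obtain ⟨i₀, hi₀⟩ := hsmall.exists
  have hev : ∀ᶠ i in l, f i = f i₀ := hsmall.mono fun i hi => hconst hi hi₀
  have hzero : f i₀ = 0 :=
    tendsto_nhds_unique (tendsto_const_nhds.congr' (hev.mono fun _ h => h.symm)) hlim
  simpa only [hzero] using hev

theorem tendsto_fourierCoeffOn_cofinite_zero {a b : ℝ} (hab : a < b) {f : ℝ → ℂ}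
    (hf : MemLp f 2 (volume.restrict (Ioc a b))) :
    Tendsto (fourierCoeffOn hab f) cofinite (𝓝 0) := by
  rw [tendsto_zero_iff_norm_tendsto_zero]
  simpa using (hasSum_sq_fourierCoeffOn hab hf).summable.tendsto_cofinite_zero.sqrt

theorem fourierCoeffOn_eq_integral_Icc {a b : ℝ} (hab : a < b) (f : ℝ → ℂ) (n : ℤ) :
    fourierCoeffOn hab f n = (1 / ((b - a : ℝ) : ℂ)) *
      ∫ x in Icc a b, f x * Complex.exp (Complex.I * 2 * π * x * (-n : ℤ) / (b - a : ℝ)) := by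
  rw [fourierCoeffOn_eq_integral, intervalIntegral.integral_of_le hab.le,
    integral_Icc_eq_integral_Ioc, Complex.real_smul]
  push_cast
  congr 1
  refine setIntegral_congr_fun measurableSet_Ioc fun x _ => ?_
  rw [fourier_coe_apply, smul_eq_mul, mul_comm]
  push_cast
  ring_nf

theorem ae_eq_sum_fourier_of_fourierCoeff_eq_zero {T : ℝ} [Fact (0 < T)] {f : AddCircle T → ℂ}
    (hf : MemLp f 2 AddCircle.haarAddCircle) {s : Finset ℤ}
    (hs : ∀ n ∉ s, fourierCoeff f n = 0) :
    f =ᵐ[AddCircle.haarAddCircle] ⇑(∑ n ∈ s, fourierCoeff f n • fourier n) := by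
  have hsum := hasSum_fourier_series_L2 (hf.toLp f)
  simp_rw [fourierCoeff_congr_ae hf.coeFn_toLp] at hsum
  have hL2 : hf.toLp f =
      ContinuousMap.toLp 2 AddCircle.haarAddCircle ℂ (∑ n ∈ s, fourierCoeff f n • fourier n) := by
    rw [hsum.unique (hasSum_sum_of_ne_finset_zero fun n hn => by rw [hs n hn, zero_smul]),
      map_sum]
    simp only [map_smul, fourierLp]
  exact hf.coeFn_toLp.symm.trans (hL2 ▸ ContinuousMap.coeFn_toLp _ _)

theorem ae_eq_sum_fourier_of_fourierCoeffOn_eq_zero {a b : ℝ} (hab : a < b) {f : ℝ → ℂ}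
    (hf : MemLp f 2 (volume.restrict (Ioc a b))) {s : Finset ℤ}
    (hs : ∀ n ∉ s, fourierCoeffOn hab f n = 0) :
    f =ᵐ[volume.restrict (Ioc a b)]
      fun x => ∑ n ∈ s, fourierCoeffOn hab f n * fourier n (x : AddCircle (b - a)) := by
  have : Fact (0 < b - a) := ⟨sub_pos.mpr hab⟩
  have hIoc : Ioc a b = Ioc a (a + (b - a)) := by rw [add_sub_cancel]
  rw [hIoc] at hf ⊢
  have hlift := ae_eq_sum_fourier_of_fourierCoeff_eq_zero hf.memLp_liftIoc.haarAddCircle hs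
  replace hlift := Measure.ae_smul_measure hlift (ENNReal.ofReal (b - a))
  rw [← AddCircle.volume_eq_smul_haarAddCircle] at hlift
  filter_upwards [(AddCircle.measurePreserving_mk (b - a) a).quasiMeasurePreserving.ae_eq_comp
    hlift, ae_restrict_mem measurableSet_Ioc] with x hx hxI
  simpa [AddCircle.liftIoc_coe_apply hxI, fourierCoeffOn] using hx

theorem analyticAt_fourier_coe {T : ℝ} (n : ℤ) (x : ℝ) :
    AnalyticAt ℝ (fun y : ℝ => fourier n (y : AddCircle T)) x := by
  simp_rw [fourier_coe_apply]
  have : AnalyticAt ℂ (fun z : ℂ => Complex.exp (2 * π * Complex.I * n * z / T)) x := by fun_prop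
  have hofReal : AnalyticAt ℝ ((↑) : ℝ → ℂ) x := Complex.ofRealCLM.analyticAt x
  exact this.restrictScalars.comp hofReal

theorem sum_fourier_coe_eq_zero_of_ae_restrict {T : ℝ} {s : Finset ℤ} {a : ℤ → ℂ}
    {U : Set ℝ} (hU : IsOpen U) (hUne : U.Nonempty)
    (h : ∀ᵐ x : ℝ ∂volume.restrict U, ∑ n ∈ s, a n * fourier n (x : AddCircle T) = 0) (x : ℝ) :
    ∑ n ∈ s, a n * fourier n (x : AddCircle T) = 0 := by
  set P : ℝ → ℂ := fun y => ∑ n ∈ s, a n * fourier n (y : AddCircle T)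
  have hP : AnalyticOnNhd ℝ P univ := fun y _ =>
    Finset.analyticAt_fun_sum _ fun n _ => analyticAt_const.mul (analyticAt_fourier_coe n y)
  have hPU : EqOn P 0 U :=
    Measure.eqOn_open_of_ae_eq h hU (hP.continuousOn.mono (subset_univ U)) continuousOn_const
  obtain ⟨x₀, hx₀⟩ := hUne
  exact hP.eqOn_zero_of_preconnected_of_eventuallyEq_zero isPreconnected_univ (mem_univ x₀)
    (eventually_of_mem (hU.mem_nhds hx₀) hPU) (mem_univ x)

theorem ae_eq_zero_of_fourierCoeffOn_eventually_zero_of_eqOn_zero {a b : ℝ} (hab : a < b)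
    {f : ℝ → ℂ} (hf : MemLp f 2 (volume.restrict (Ioc a b)))
    (hfin : ∀ᶠ n in cofinite, fourierCoeffOn hab f n = 0) {U : Set ℝ} (hU : IsOpen U)
    (hUne : U.Nonempty) (hUsub : U ⊆ Ioc a b) (hfU : EqOn f 0 U) :
    f =ᵐ[volume.restrict (Ioc a b)] 0 := by
  set S := (eventually_cofinite.mp hfin).toFinset
  have hP := ae_eq_sum_fourier_of_fourierCoeffOn_eq_zero hab hf (s := S) (by simp [S])
  have hP0 := sum_fourier_coe_eq_zero_of_ae_restrict hU hUne (by
    filter_upwards [ae_restrict_of_ae_restrict_of_subset hUsub hP,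
      ae_restrict_mem hU.measurableSet] with x hx hxU
    rw [← hx, hfU hxU, Pi.zero_apply])
  exact hP.trans (Eventually.of_forall hP0)

theorem no_quantized_fourier_coefficients (ξ₀ : ℝ) (hξ₀ : 0 < ξ₀)
    (u : ℝ → ℂ) (hu : MemLp u 2 (volume : Measure ℝ))
    (σ : ℝ) (hσ : σ < 0.8 * ξ₀)
    (hsupp : Function.support u ⊆ Set.Icc (-(σ / (2 * π))) (σ / (2 * π)))
    (hne : ¬ (∀ᵐ ξ : ℝ ∂volume, u ξ = 0))
    (c : ℤ → ℂ)
    (hc : ∀ n : ℤ,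
      c (-n) = (1 / (ξ₀ : ℂ)) *
        ∫ ξ in Set.Icc (-(ξ₀ / 2)) (ξ₀ / 2),
          u ξ * Complex.exp (Complex.I * 2 * π * ξ * n / ξ₀))
    (Δ : ℝ) (hΔ : 0 < Δ) (γ : ℝ) :
    ¬ (∀ n : ℤ, ∃ m : ℤ, c n = (((m : ℝ) * Δ + γ) / ξ₀ : ℝ)) := by
  intro hquant
  choose m hm using hquant
  set s := σ / (2 * π)
  have hs : s < ξ₀ / 2 := by
    rw [div_lt_iff₀ (by positivity)]
    nlinarith [pi_gt_three]
  have hab : -(ξ₀ / 2) < ξ₀ / 2 := by linarith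
  have hu2 : MemLp u 2 (volume.restrict (Ioc (-(ξ₀ / 2)) (ξ₀ / 2))) := hu.restrict _
  have hcoeff : fourierCoeffOn hab u = c := funext fun n => by
    rw [fourierCoeffOn_eq_integral_Icc, show ξ₀ / 2 - -(ξ₀ / 2) = ξ₀ by ring, ← hc, neg_neg]
  have hfinite : ∀ᶠ n in cofinite, c n = 0 := by
    have hlim := tendsto_fourierCoeffOn_cofinite_zero hab hu2
    rw [hcoeff, funext hm, ← Complex.ofReal_zero, tendsto_ofReal_iff] at hlim
    refine (hlim.eventually_eq_zero_of_forall_eq_intCast_mul_add (Δ := Δ / ξ₀) (γ := γ / ξ₀)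
      (by positivity) fun n => ⟨m n, by ring⟩).mono fun n hn => ?_
    rw [hm, hn, Complex.ofReal_zero]
  have hzero := ae_eq_zero_of_fourierCoeffOn_eventually_zero_of_eqOn_zero hab hu2
    (hcoeff ▸ hfinite) (U := Ioo (max s (-(ξ₀ / 2))) (ξ₀ / 2)) isOpen_Ioo
    (nonempty_Ioo.mpr (max_lt hs hab)) (fun x hx => ⟨(le_max_right _ _).trans_lt hx.1, hx.2.le⟩)
    fun x hx => Function.notMem_support.mp fun h =>
      (hsupp h).2.not_gt ((le_max_left _ _).trans_lt hx.1)
  have hsuppIoc : Function.support u ⊆ Ioc (-(ξ₀ / 2)) (ξ₀ / 2) :=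
    hsupp.trans (Icc_subset_Ioc (by linarith) (by linarith))
  exact hne (Set.indicator_eq_self.mpr hsuppIoc ▸
    indicator_ae_eq_zero_of_restrict_ae_eq_zero measurableSet_Ioc hzero)
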